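/- arXiv:1508.02268 — 2 statements merged into one kernel-verified Lean document; each statement's English description precedes it below -/
import Mathlib

section
/- For any real number x, ∫₀^∞ (2πλ)^{-1/2} exp(-(λ + x)²/(2λ)) dλ = exp(-2·max(0, x)). -/
/-!
Substituting `λ = u²` turns the integrand into `(2 / √(2π)) e^{-2 max(0,x)} e^{-(u - |x|/u)²/2}`,
because `(u² + x)² / (2u²) = 2 max(0,x) + (u - |x|/u)² / 2`. The remaining integral is `√(2π)/2` by
the Cauchy–Schlömilch transformation: for `b > 0`, `u ↦ u - b/u` maps `(0,∞)` bijectively onto `ℝ`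
with Jacobian `1 + b/u²`, and the inversion `u ↦ b/u` turns the part `b/u²` of the Jacobian into `1`
while negating `u - b/u`; hence `∫₀^∞ f(u - b/u) du = ½ ∫ f` for every even integrable `f`.
-/

open Real MeasureTheory Set

section SubDiv

variable {b : ℝ}

theorem hasDerivAt_sub_div {u : ℝ} (hu : u ≠ 0) :
    HasDerivAt (fun u => u - b / u) (1 + b / u ^ 2) u := by
  simpa [div_eq_mul_inv] using (hasDerivAt_id' u).fun_sub ((hasDerivAt_inv hu).const_mul b)

theorem strictMonoOn_sub_div (hb : 0 ≤ b) : StrictMonoOn (fun u => u - b / u) (Ioi 0) :=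
  fun _ hu _ _ huw => by linarith [div_le_div_of_nonneg_left hb hu huw.le]

theorem image_sub_div_Ioi (hb : 0 < b) : (fun u => u - b / u) '' Ioi 0 = univ := by
  refine eq_univ_of_forall fun v => ?_
  -- the positive root of `u ^ 2 - v * u - b`
  set s := √(v ^ 2 + 4 * b)
  have hs : s ^ 2 = v ^ 2 + 4 * b := sq_sqrt (by positivity)
  have hvs : 0 < v + s := by
    have : |v| < s := (lt_sqrt (abs_nonneg v)).mpr (by rw [sq_abs]; linarith)
    linarith [neg_abs_le v]
  refine ⟨(v + s) / 2, half_pos hvs, ?_⟩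
  field_simp
  nlinarith

variable {E : Type*} [NormedAddCommGroup E] [NormedSpace ℝ E]

theorem integrableOn_Ioi_smul_comp_sub_div_iff (hb : 0 < b) {g : ℝ → E} :
    IntegrableOn (fun u => (1 + b / u ^ 2) • g (u - b / u)) (Ioi 0) ↔ Integrable g := by
  rw [← integrableOn_univ, ← image_sub_div_Ioi hb,
    integrableOn_image_iff_integrableOn_abs_deriv_smul measurableSet_Ioi
      (fun u hu => (hasDerivAt_sub_div (ne_of_gt hu)).hasDerivWithinAt)
      (strictMonoOn_sub_div hb.le).injOn]
  refine integrableOn_congr_fun (fun u hu => ?_) measurableSet_Ioi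
  simp only [abs_of_pos (add_pos one_pos (div_pos hb (pow_pos hu 2)))]

theorem integral_Ioi_smul_comp_sub_div (hb : 0 < b) (g : ℝ → E) :
    ∫ u in Ioi 0, (1 + b / u ^ 2) • g (u - b / u) = ∫ v, g v := by
  conv_rhs => rw [← setIntegral_univ, ← image_sub_div_Ioi hb,
    integral_image_eq_integral_abs_deriv_smul measurableSet_Ioi
      (fun u hu => (hasDerivAt_sub_div (ne_of_gt hu)).hasDerivWithinAt)
      (strictMonoOn_sub_div hb.le).injOn]
  refine setIntegral_congr_fun measurableSet_Ioi fun u hu => ?_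
  simp only [abs_of_pos (add_pos one_pos (div_pos hb (pow_pos hu 2)))]

theorem integral_Ioi_div_sq_smul_comp_div (hb : 0 < b) (g : ℝ → E) :
    ∫ u in Ioi 0, (b / u ^ 2) • g (b / u) = ∫ u in Ioi 0, g u := by
  have hderiv : ∀ u ∈ Ioi (0 : ℝ), HasDerivWithinAt (b / ·) (-(b / u ^ 2)) (Ioi 0) u := by
    intro u hu
    simpa [div_eq_mul_inv] using ((hasDerivAt_inv (ne_of_gt hu)).const_mul b).hasDerivWithinAt
  have hanti : StrictAntiOn (b / ·) (Ioi (0 : ℝ)) := fun _ hu _ _ huw =>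
    div_lt_div_of_pos_left hb hu huw
  have himage : (b / ·) '' Ioi (0 : ℝ) = Ioi 0 := by
    refine Subset.antisymm (image_subset_iff.mpr fun u hu => div_pos hb hu) fun v hv => ?_
    exact ⟨b / v, div_pos hb hv, div_div_cancel₀ hb.ne'⟩
  conv_rhs => rw [← himage, integral_image_eq_integral_abs_deriv_smul measurableSet_Ioi hderiv
    hanti.injOn]
  refine setIntegral_congr_fun measurableSet_Ioi fun u hu => ?_
  simp only [abs_neg, abs_of_pos (div_pos hb (pow_pos hu 2))]

theorem integral_Ioi_comp_sub_div_of_even {f : ℝ → ℝ} (hf : Function.Even f) (hfi : Integrable f)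
    (hb : 0 ≤ b) : ∫ u in Ioi 0, f (u - b / u) = (∫ v, f v) / 2 := by
  rcases hb.eq_or_lt with rfl | hb
  · have habs : (fun v => f |v|) = f := funext fun v => by
      rcases abs_choice v with h | h <;> simp only [h, hf v]
    simp only [zero_div, sub_zero]
    rw [show ∫ v, f v = ∫ v, f |v| by rw [habs], integral_comp_abs]
    ring
  have hweighted : IntegrableOn (fun u => (1 + b / u ^ 2) * f (u - b / u)) (Ioi 0) :=
    (integrableOn_Ioi_smul_comp_sub_div_iff hb).mpr hfi
  have hpos : ∀ u ∈ Ioi (0 : ℝ), 0 < b / u ^ 2 := fun u hu => div_pos hb (pow_pos hu 2)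
  have hcomp : IntegrableOn (fun u => f (u - b / u)) (Ioi 0) := by
    have hbound : ∀ u ∈ Ioi (0 : ℝ), ‖(1 + b / u ^ 2)⁻¹‖ ≤ 1 := fun u hu => by
      rw [norm_inv, norm_of_nonneg (by linarith [hpos u hu])]
      exact inv_le_one_of_one_le₀ (by linarith [hpos u hu])
    refine IntegrableOn.congr_fun (hweighted.bdd_mul
      (by fun_prop : Measurable fun u : ℝ => (1 + b / u ^ 2)⁻¹).aestronglyMeasurable
      (ae_restrict_of_forall_mem measurableSet_Ioi hbound)) (fun u hu => ?_) measurableSet_Ioi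
    exact inv_mul_cancel_left₀ (by linarith [hpos u hu]) _
  have hinv : ∫ u in Ioi 0, b / u ^ 2 * f (u - b / u) = ∫ u in Ioi 0, f (u - b / u) := by
    rw [← integral_Ioi_div_sq_smul_comp_div hb (fun u => f (u - b / u))]
    refine setIntegral_congr_fun measurableSet_Ioi fun u hu => ?_
    rw [smul_eq_mul, ← hf]
    congr 2
    field_simp
    ring
  calc ∫ u in Ioi 0, f (u - b / u)
      = ((∫ u in Ioi 0, f (u - b / u)) + ∫ u in Ioi 0, b / u ^ 2 * f (u - b / u)) / 2 := by
        rw [hinv]; ring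
    _ = (∫ u in Ioi 0, (1 + b / u ^ 2) * f (u - b / u)) / 2 := by
        rw [← integral_add hcomp]
        · simp only [add_mul, one_mul]
        · exact (hweighted.sub hcomp).congr_fun (fun u _ => by simp only [Pi.sub_apply]; ring)
            measurableSet_Ioi
    _ = (∫ v, f v) / 2 := by rw [← integral_Ioi_smul_comp_sub_div hb]; rfl

end SubDiv

theorem integral_exp_neg_sq_div_two : ∫ v : ℝ, exp (-v ^ 2 / 2) = √(2 * π) := by
  have : ∀ v : ℝ, -v ^ 2 / 2 = -(1 / 2) * v ^ 2 := fun v => by ring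
  simp only [this, integral_gaussian]
  norm_num [div_div_eq_mul_div, mul_comm]

theorem integrable_exp_neg_sq_div_two : Integrable fun v : ℝ => exp (-v ^ 2 / 2) := by
  have : ∀ v : ℝ, -v ^ 2 / 2 = -(1 / 2) * v ^ 2 := fun v => by ring
  simpa only [this] using integrable_exp_neg_mul_sq one_half_pos

theorem integral_Ioi_exp_neg_sq_sub_div_div_two {b : ℝ} (hb : 0 ≤ b) :
    ∫ u in Ioi 0, exp (-(u - b / u) ^ 2 / 2) = √(2 * π) / 2 := by
  rw [integral_Ioi_comp_sub_div_of_even (f := fun v => exp (-v ^ 2 / 2))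
    (fun v => by simp only [neg_sq]) integrable_exp_neg_sq_div_two hb, integral_exp_neg_sq_div_two]

theorem sq_add_div_two_mul_sq_eq {u : ℝ} (hu : u ≠ 0) (x : ℝ) :
    (u ^ 2 + x) ^ 2 / (2 * u ^ 2) = 2 * max 0 x + (u - |x| / u) ^ 2 / 2 := by
  rcases le_total 0 x with hx | hx
  · rw [max_eq_right hx, abs_of_nonneg hx]
    field_simp
    ring
  · rw [max_eq_left hx, abs_of_nonpos hx]
    field_simp
    ring

/-- Data augmentation (scale mixture of Gaussians) identity for the hinge loss:
for any real `x`, `∫₀^∞ (2πλ)^(-1/2) exp(-(λ + x)²/(2λ)) dλ = exp(-2 max(0, x))`. -/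
theorem hinge_scale_mixture_identity (x : ℝ) :
    ∫ l in Set.Ioi (0 : ℝ),
        (1 / Real.sqrt (2 * Real.pi * l)) * Real.exp (-(l + x) ^ 2 / (2 * l)) =
      Real.exp (-2 * max 0 x) := by
  have hintegrand : ∀ u ∈ Ioi (0 : ℝ),
      (|(2 : ℝ)| * u ^ ((2 : ℝ) - 1)) • ((1 / √(2 * π * u ^ (2 : ℝ))) *
        exp (-(u ^ (2 : ℝ) + x) ^ 2 / (2 * u ^ (2 : ℝ)))) =
      2 / √(2 * π) * exp (-2 * max 0 x) * exp (-(u - |x| / u) ^ 2 / 2) := by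
    intro u (hu : 0 < u)
    rw [rpow_two, show (2 : ℝ) - 1 = 1 by norm_num, rpow_one, abs_two, smul_eq_mul,
      sqrt_mul (by positivity), sqrt_sq hu.le, neg_div, sq_add_div_two_mul_sq_eq hu.ne',
      neg_add, exp_add]
    field_simp
  rw [← integral_comp_rpow_Ioi _ two_ne_zero, setIntegral_congr_fun measurableSet_Ioi hintegrand,
    integral_const_mul, integral_Ioi_exp_neg_sq_sub_div_div_two (abs_nonneg x)]
  field_simp
end

section
/- Fix c > 0, γₙ > 0, δₙ > 0, responses yₙ ∈ ℝ, ε ≥ 0, and random vectors x̃ₙ. Writing Δₙ = yₙ - wᵀx̃ₙ, the function w ↦ (c²/2)·Σₙ E[γₙ(Δₙ - ε)² + δₙ(Δₙ + ε)²] equals (c²/2)·Σₙ (γₙ + δₙ)·E[(wᵀx̃ₙ - yₙ^ε)²] plus a constant independent of w, where yₙ^ε = yₙ + ((δₙ - γₙ)/(δₙ + γₙ))·ε. -/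
open MeasureTheory

/-! Completing the square pointwise turns `γ (Δ - ε)² + δ (Δ + ε)²` into
`(γ + δ) (wᵀx̃ - y^ε)² + 4 γ δ ε² / (γ + δ)`, whose last term does not involve `w`.
Integration is linear here because `wᵀx̃ ∈ L²` and `μ` is finite. -/

theorem mul_sub_sq_add_mul_add_sq_eq {a b : ℝ} (hab : b + a ≠ 0) (y s e : ℝ) :
    a * ((y - s) - e) ^ 2 + b * ((y - s) + e) ^ 2
      = (a + b) * (s - (y + (b - a) / (b + a) * e)) ^ 2 + 4 * a * b * e ^ 2 / (b + a) := by
  field_simp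
  ring

theorem integral_mul_sub_sq_add_mul_add_sq {Ω : Type*} [MeasurableSpace Ω] {μ : Measure Ω}
    [IsFiniteMeasure μ] {f : Ω → ℝ} (hf : MemLp f 2 μ) {a b : ℝ} (hab : b + a ≠ 0) (y e : ℝ) :
    ∫ ω, (a * ((y - f ω) - e) ^ 2 + b * ((y - f ω) + e) ^ 2) ∂μ
      = (a + b) * ∫ ω, (f ω - (y + (b - a) / (b + a) * e)) ^ 2 ∂μ
        + μ.real Set.univ * (4 * a * b * e ^ 2 / (b + a)) := by
  have hsq : Integrable (fun ω => (f ω - (y + (b - a) / (b + a) * e)) ^ 2) μ :=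
    (hf.sub (memLp_const _)).integrable_sq
  simp_rw [mul_sub_sq_add_mul_add_sq_eq hab]
  rw [integral_add (hsq.const_mul _) (integrable_const _), integral_const_mul, integral_const,
    smul_eq_mul]

theorem dropout_svr_mstep_reweighted_quadratic_general {Ω : Type*} [MeasurableSpace Ω]
    (μ : Measure Ω) [IsProbabilityMeasure μ] (D N : ℕ)
    (X : Fin N → Fin D → Ω → ℝ) (γ δ : Fin N → ℝ) (y : Fin N → ℝ)
    (c ε : ℝ) (hγ : ∀ n, 0 < γ n) (hδ : ∀ n, 0 < δ n)
    (hL2 : ∀ n d, MemLp (X n d) 2 μ) :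
    ∃ C : ℝ, ∀ w : Fin D → ℝ,
      c ^ 2 / 2 * (∑ n, ∫ ω,
          (γ n * ((y n - ∑ d, w d * X n d ω) - ε) ^ 2
            + δ n * ((y n - ∑ d, w d * X n d ω) + ε) ^ 2) ∂μ)
        = c ^ 2 / 2 * ∑ n, (γ n + δ n) *
            ∫ ω, ((∑ d, w d * X n d ω)
              - (y n + (δ n - γ n) / (δ n + γ n) * ε)) ^ 2 ∂μ
          + C := by
  refine ⟨c ^ 2 / 2 * ∑ n, μ.real Set.univ * (4 * γ n * δ n * ε ^ 2 / (δ n + γ n)),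
    fun w => ?_⟩
  have hfit : ∀ n, MemLp (fun ω => ∑ d, w d * X n d ω) 2 μ := fun n =>
    memLp_finsetSum _ fun d _ => (hL2 n d).const_mul (w d)
  have hweight_ne : ∀ n, δ n + γ n ≠ 0 := fun n => (add_pos (hδ n) (hγ n)).ne'
  rw [Finset.sum_congr rfl fun n _ => integral_mul_sub_sq_add_mul_add_sq (hfit n) (hweight_ne n) (y n) ε,
    Finset.sum_add_distrib, mul_add]

/-- Lemma 2 (M-step for dropout support vector regression): with fixed
re-weights `γₙ, δₙ > 0`, responses `yₙ ∈ ℝ`, `ε ≥ 0` and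
`Δₙ = yₙ - wᵀx̃ₙ`, the objective
`w ↦ (c²/2) Σₙ E[γₙ(Δₙ - ε)² + δₙ(Δₙ + ε)²]` equals
`(c²/2) Σₙ (γₙ + δₙ) E[(wᵀx̃ₙ - yₙ^ε)²]` plus a constant independent of `w`,
where `yₙ^ε = yₙ + ((δₙ - γₙ)/(δₙ + γₙ)) ε`. -/
theorem dropout_svr_mstep_reweighted_quadratic {Ω : Type*} [MeasurableSpace Ω]
    (μ : Measure Ω) [IsProbabilityMeasure μ] (D N : ℕ)
    (X : Fin N → Fin D → Ω → ℝ) (γ δ : Fin N → ℝ) (y : Fin N → ℝ)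
    (c ε : ℝ) (hc : 0 < c) (hγ : ∀ n, 0 < γ n) (hδ : ∀ n, 0 < δ n)
    (hε : 0 ≤ ε)
    (hL2 : ∀ n d, MemLp (X n d) 2 μ) :
    ∃ C : ℝ, ∀ w : Fin D → ℝ,
      c ^ 2 / 2 * (∑ n, ∫ ω,
          (γ n * ((y n - ∑ d, w d * X n d ω) - ε) ^ 2
            + δ n * ((y n - ∑ d, w d * X n d ω) + ε) ^ 2) ∂μ)
        = c ^ 2 / 2 * ∑ n, (γ n + δ n) *
            ∫ ω, ((∑ d, w d * X n d ω)
              - (y n + (δ n - γ n) / (δ n + γ n) * ε)) ^ 2 ∂μ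
          + C :=
  dropout_svr_mstep_reweighted_quadratic_general μ D N X γ δ y c ε hγ hδ hL2
end
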